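/- arXiv:2301.11054 — 7 statements merged into one kernel-verified Lean document; each statement's English description precedes it below -/
import Mathlib

section
/- Let N_1,...,N_d be n×n Hermitian matrices with N_1 + ... + N_d = I_n. Then {a ∈ ℝ^d : a_1N_1+...+a_dN_d ⪰ 0} equals the nonnegative orthant ℝ_{≥0}^d if and only if there exists a unitary U ∈ Mat_n(ℂ) such that for every i, U*N_iU is block diagonal of the form diag(E_ii, Ñ_i) with E_ii the d×d standard matrix unit and Ñ_i positive semidefinite. -/
open ComplexOrder Matrix BigOperators

/-!
Testing the hypothesis at `a = eᵢ` shows that every `N i` is positive semidefinite, and at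
`a = 1 - t • eᵢ` that `1 - t • N i` is positive semidefinite exactly for `t ≤ 1`; so `1 - N i` is
positive semidefinite but not definite, and `N i` has a unit vector `vᵢ` with `N i vᵢ = vᵢ`.
As `1 - N i = ∑_{j ≠ i} N j` is a sum of positive semidefinite matrices killing `vᵢ`, each `N j`
with `j ≠ i` kills `vᵢ`. Hence the `vᵢ` are orthonormal, and a unitary whose first columns are the
`vᵢ` brings every `N i` to the block form. Conversely, in block form every `N i` is positive
semidefinite and the quadratic form of `∑ aⱼ • N j` at the `i`-th column of `U` is `aᵢ`.
-/

section Pencil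

variable {𝕜 ι M : Type*} [RCLike 𝕜] [Fintype ι] [DecidableEq ι] [AddCommGroup M] [Module 𝕜 M]

lemma sum_ofReal_single_smul (N : ι → M) (i : ι) :
    ∑ j, ((Pi.single i (1 : ℝ) : ι → ℝ) j : 𝕜) • N j = N i := by
  simp [Pi.single_apply]

lemma sum_ofReal_update_one_smul [Module ℝ M] [IsScalarTower ℝ 𝕜 M] (N : ι → M) (i : ι) (t : ℝ) :
    ∑ j, ((Function.update (1 : ι → ℝ) i (1 - t) j : ℝ) : 𝕜) • N j = ∑ j, N j - t • N i := by
  rw [← Finset.add_sum_erase _ _ (Finset.mem_univ i),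
    Finset.sum_congr rfl fun j hj => by rw [Function.update_of_ne (Finset.ne_of_mem_erase hj)],
    Function.update_self]
  simp only [Pi.one_apply, RCLike.ofReal_one, one_smul]
  rw [Finset.sum_erase_eq_sub (Finset.mem_univ i), ← RCLike.real_smul_eq_coe_smul]
  module

end Pencil

namespace Matrix

lemma IsHermitian.eq_fromBlocks_of_toBlocks₂₁_eq_zero {α n m : Type*} [AddMonoid α]
    [StarAddMonoid α] {B : Matrix (n ⊕ m) (n ⊕ m) α} (hB : B.IsHermitian) (h : B.toBlocks₂₁ = 0) :
    B = Matrix.fromBlocks B.toBlocks₁₁ 0 0 B.toBlocks₂₂ := by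
  have h₁₂ := (isHermitian_fromBlocks_iff.mp (B.fromBlocks_toBlocks.symm ▸ hB)).2.2.1
  rw [h, conjTranspose_zero] at h₁₂
  conv_lhs => rw [← B.fromBlocks_toBlocks, h, ← h₁₂]

variable {𝕜 n : Type*} [RCLike 𝕜] [Fintype n]

lemma PosSemidef.fromBlocks_diag {m : Type*} [Fintype m] {A : Matrix n n 𝕜} {D : Matrix m m 𝕜}
    (hA : A.PosSemidef) (hD : D.PosSemidef) : (fromBlocks A 0 0 D).PosSemidef := by
  refine .of_dotProduct_mulVec_nonneg
    (isHermitian_fromBlocks_iff.mpr ⟨hA.1, by simp, by simp, hD.1⟩) fun x => ?_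
  rw [← Sum.elim_comp_inl_inr x, Function.star_sumElim, fromBlocks_mulVec]
  simp only [zero_mulVec, add_zero, zero_add, sumElim_dotProduct_sumElim]
  exact add_nonneg (hA.dotProduct_mulVec_nonneg _) (hD.dotProduct_mulVec_nonneg _)

lemma conjTranspose_mul_mul_apply {m : Type*} (U : Matrix n m 𝕜) (M : Matrix n n 𝕜) (k l : m) :
    (Uᴴ * M * U) k l = star (fun p => U p k) ⬝ᵥ (M *ᵥ fun p => U p l) := by
  rw [dotProduct_mulVec]
  rfl

lemma IsHermitian.star_dotProduct_eq_zero {A : Matrix n n 𝕜} (hA : A.IsHermitian) {x y : n → 𝕜}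
    (hx : A *ᵥ x = x) (hy : A *ᵥ y = 0) : star x ⬝ᵥ y = 0 :=
  calc star x ⬝ᵥ y = star (A *ᵥ x) ⬝ᵥ y := by rw [hx]
    _ = star x ⬝ᵥ (A *ᵥ y) := by rw [star_mulVec, ← dotProduct_mulVec, hA.eq]
    _ = 0 := by rw [hy, dotProduct_zero]

lemma PosSemidef.mulVec_eq_zero_of_sum_mulVec_eq_zero {ι : Type*} {s : Finset ι}
    {N : ι → Matrix n n 𝕜} (hN : ∀ i ∈ s, (N i).PosSemidef) {x : n → 𝕜}
    (hx : (∑ i ∈ s, N i) *ᵥ x = 0) : ∀ i ∈ s, N i *ᵥ x = 0 := by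
  have h0 : ∑ i ∈ s, star x ⬝ᵥ (N i *ᵥ x) = 0 := by
    rw [← dotProduct_sum, ← sum_mulVec, hx, dotProduct_zero]
  intro i hi
  rw [← (hN i hi).dotProduct_mulVec_zero_iff]
  exact (Finset.sum_eq_zero_iff_of_nonneg fun j hj => (hN j hj).dotProduct_mulVec_nonneg x).mp
    h0 i hi

theorem posSemidef_sum_smul_iff {ι : Type*} [Fintype ι] [DecidableEq ι] {N : ι → Matrix n n 𝕜}
    (hN : ∀ i, (N i).PosSemidef) (x : ι → n → 𝕜)
    (hx : ∀ i j, star (x i) ⬝ᵥ (N j *ᵥ x i) = if i = j then 1 else 0) (a : ι → ℝ) :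
    (∑ i, (a i : 𝕜) • N i).PosSemidef ↔ ∀ i, 0 ≤ a i := by
  refine ⟨fun h i => ?_, fun ha => posSemidef_sum _ fun i _ =>
    (hN i).smul (RCLike.ofReal_nonneg.mpr (ha i))⟩
  have hquad : star (x i) ⬝ᵥ ((∑ j, (a j : 𝕜) • N j) *ᵥ x i) = a i := by
    simp only [sum_mulVec, dotProduct_sum, smul_mulVec, dotProduct_smul, hx, smul_eq_mul,
      mul_ite, mul_one, mul_zero, Finset.sum_ite_eq, Finset.mem_univ, if_true]
  exact RCLike.ofReal_nonneg.mp (hquad ▸ h.dotProduct_mulVec_nonneg (x i))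

variable [DecidableEq n]

lemma PosSemidef.exists_unit_mulVec_eq_zero {M : Matrix n n 𝕜} (hM : M.PosSemidef)
    (h : ¬ M.PosDef) :
    ∃ v : n → 𝕜, star v ⬝ᵥ v = 1 ∧ M *ᵥ v = 0 := by
  obtain ⟨k, hk⟩ : ∃ k, hM.1.eigenvalues k = 0 := by
    by_contra! hne
    exact h (hM.1.posDef_iff_eigenvalues_pos.mpr fun k =>
      (hM.eigenvalues_nonneg k).lt_of_ne' (hne k))
  refine ⟨hM.1.eigenvectorBasis k, ?_, by rw [hM.1.mulVec_eigenvectorBasis, hk, zero_smul]⟩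
  rw [dotProduct_comm, ← EuclideanSpace.inner_eq_star_dotProduct,
    inner_self_eq_norm_sq_to_K, hM.1.eigenvectorBasis.orthonormal.1 k]
  simp

open MatrixOrder in
lemma PosDef.exists_pos_posSemidef_sub_smul_one {M : Matrix n n 𝕜} (hM : M.PosDef) :
    ∃ r : ℝ, 0 < r ∧ (M - r • 1).PosSemidef := by
  cases isEmpty_or_nonempty n
  · exact ⟨1, one_pos, Subsingleton.elim (M - (1:ℝ) • 1) 0 ▸ .zero⟩
  obtain ⟨r, hr, hle⟩ := (CFC.exists_pos_algebraMap_le_iff hM.isHermitian.isSelfAdjoint).2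
    fun x hx => hM.isStrictlyPositive.spectrum_pos hx
  exact ⟨r, hr, by rwa [Algebra.algebraMap_eq_smul_one, le_iff] at hle⟩

lemma exists_unit_mulVec_eq_self_of_forall_not_posSemidef {A : Matrix n n 𝕜}
    (h1 : (1 - A).PosSemidef) (h : ∀ t : ℝ, 1 < t → ¬ (1 - t • A).PosSemidef) :
    ∃ v : n → 𝕜, star v ⬝ᵥ v = 1 ∧ A *ᵥ v = v := by
  by_cases hpd : (1 - A).PosDef
  · obtain ⟨r, hr, hsub⟩ := hpd.exists_pos_posSemidef_sub_smul_one
    have hid : 1 - (1 + r) • A = (1 + r) • (1 - A - r • 1) + r ^ 2 • (1 : Matrix n n 𝕜) := by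
      module
    refine absurd ?_ (h (1 + r) (by linarith))
    rw [hid]
    exact (hsub.smul (by positivity)).add (PosSemidef.one.smul (by positivity))
  · obtain ⟨v, hv, hAv⟩ := h1.exists_unit_mulVec_eq_zero hpd
    exact ⟨v, hv, by rwa [sub_mulVec, one_mulVec, sub_eq_zero, eq_comm] at hAv⟩

section Blocks

variable {ι κ : Type*} [Fintype ι] [DecidableEq ι] [Fintype κ] [DecidableEq κ]

theorem exists_unitary_conj_eq_fromBlocks {N : ι → Matrix (ι ⊕ κ) (ι ⊕ κ) 𝕜}
    (hN : ∀ i, (N i).PosSemidef) (v : ι → ι ⊕ κ → 𝕜)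
    (hv : ∀ i j, star (v i) ⬝ᵥ v j = if i = j then 1 else 0)
    (hNv : ∀ i j, N i *ᵥ v j = if j = i then v i else 0) :
    ∃ U ∈ unitaryGroup (ι ⊕ κ) 𝕜, ∃ Nt : ι → Matrix κ κ 𝕜, (∀ i, (Nt i).PosSemidef) ∧
      ∀ i, star U * N i * U = fromBlocks (single i i 1) 0 0 (Nt i) := by
  have hon : Orthonormal 𝕜 ((Set.range Sum.inl).domRestrict
      (Sum.elim (fun i => WithLp.toLp 2 (v i)) 0 : ι ⊕ κ → EuclideanSpace 𝕜 (ι ⊕ κ))) := by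
    rw [orthonormal_iff_ite]
    rintro ⟨_, hi⟩ ⟨_, hj⟩
    obtain ⟨i, rfl⟩ := hi
    obtain ⟨j, rfl⟩ := hj
    change inner 𝕜 (WithLp.toLp 2 (v i)) (WithLp.toLp 2 (v j)) = _
    rw [EuclideanSpace.inner_toLp_toLp, dotProduct_comm, hv]
    exact if_congr (Subtype.ext_iff.trans Sum.inl_injective.eq_iff).symm rfl rfl
  obtain ⟨b, hb⟩ := hon.exists_orthonormalBasis_extension_of_card_eq (by simp)
  have hbv : ∀ j, (b (.inl j)).ofLp = v j := fun j => by rw [hb _ ⟨j, rfl⟩]; rfl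
  have hb_dot : ∀ k l, star (b k).ofLp ⬝ᵥ (b l).ofLp = if k = l then 1 else 0 := fun k l => by
    rw [dotProduct_comm, ← EuclideanSpace.inner_eq_star_dotProduct,
      orthonormal_iff_ite.mp b.orthonormal]
  set U := (EuclideanSpace.basisFun (ι ⊕ κ) 𝕜).toBasis.toMatrix b.toBasis
  have hcol : ∀ i k j, (star U * N i * U) k (.inl j) = if j = i ∧ k = .inl i then 1 else 0 := by
    intro i k j
    rw [star_eq_conjTranspose, conjTranspose_mul_mul_apply]
    change star (b k).ofLp ⬝ᵥ (N i *ᵥ (b (.inl j)).ofLp) = _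
    rw [hbv, hNv]
    by_cases hji : j = i
    · subst hji
      rw [if_pos rfl, ← hbv, hb_dot]
      simp
    · simp [hji]
  refine ⟨U, (EuclideanSpace.basisFun _ 𝕜).toMatrix_orthonormalBasis_mem_unitary b,
    fun i => (star U * N i * U).toBlocks₂₂,
    fun i => ((hN i).conjTranspose_mul_mul_same U).submatrix _, fun i => ?_⟩
  have hB : (star U * N i * U).PosSemidef := (hN i).conjTranspose_mul_mul_same U
  refine (hB.1.eq_fromBlocks_of_toBlocks₂₁_eq_zero ?_).trans (congrArg (fromBlocks · 0 0 _) ?_)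
  · ext k j
    simp [toBlocks₂₁, hcol]
  · ext p j
    simp [toBlocks₁₁, hcol, single_apply, and_comm, eq_comm]

theorem exists_unitary_conj_eq_fromBlocks_of_posSemidef_iff
    {N : ι → Matrix (ι ⊕ κ) (ι ⊕ κ) 𝕜} (hSum : ∑ i, N i = 1)
    (h : ∀ a : ι → ℝ, (∑ i, (a i : 𝕜) • N i).PosSemidef ↔ ∀ i, 0 ≤ a i) :
    ∃ U ∈ unitaryGroup (ι ⊕ κ) 𝕜, ∃ Nt : ι → Matrix κ κ 𝕜, (∀ i, (Nt i).PosSemidef) ∧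
      ∀ i, star U * N i * U = fromBlocks (single i i 1) 0 0 (Nt i) := by
  have hpsd : ∀ i, (N i).PosSemidef := fun i => by
    rw [← sum_ofReal_single_smul (𝕜 := 𝕜) N i, h]
    intro j
    by_cases hj : j = i <;> simp [hj]
  have hfix : ∀ i, ∃ v, star v ⬝ᵥ v = 1 ∧ N i *ᵥ v = v := fun i => by
    refine exists_unit_mulVec_eq_self_of_forall_not_posSemidef ?_ fun t ht => ?_
    · have h1 := (h (Function.update 1 i (1 - 1))).mpr fun j => by
        by_cases hj : j = i <;> simp [hj]
      rwa [sum_ofReal_update_one_smul, hSum, one_smul] at h1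
    · rw [← hSum, ← sum_ofReal_update_one_smul (𝕜 := 𝕜) N i t, h]
      exact fun hnn => ht.not_ge (by simpa using hnn i)
  choose v hv_norm hv_fix using hfix
  have hv_kill : ∀ i j, j ≠ i → N j *ᵥ v i = 0 := by
    intro i j hji
    have hrest : (∑ k ∈ Finset.univ.erase i, N k) *ᵥ v i = 0 := by
      rw [Finset.sum_erase_eq_sub (Finset.mem_univ i), hSum, sub_mulVec, one_mulVec, hv_fix,
        sub_self]
    exact PosSemidef.mulVec_eq_zero_of_sum_mulVec_eq_zero (fun k _ => hpsd k) hrest j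
      (Finset.mem_erase.mpr ⟨hji, Finset.mem_univ j⟩)
  refine exists_unitary_conj_eq_fromBlocks hpsd v (fun i j => ?_) (fun i j => ?_)
  · by_cases hij : i = j
    · rw [if_pos hij, ← hij, hv_norm]
    · rw [if_neg hij, (hpsd i).isHermitian.star_dotProduct_eq_zero (hv_fix i) (hv_kill j i hij)]
  · by_cases hji : j = i
    · rw [if_pos hji, hji, hv_fix]
    · rw [if_neg hji, hv_kill j i (Ne.symm hji)]

theorem posSemidef_sum_smul_iff_of_unitary_conj_eq_fromBlocks
    {N : ι → Matrix (ι ⊕ κ) (ι ⊕ κ) 𝕜} {U : Matrix (ι ⊕ κ) (ι ⊕ κ) 𝕜}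
    (hU : U ∈ unitaryGroup (ι ⊕ κ) 𝕜) {Nt : ι → Matrix κ κ 𝕜} (hNt : ∀ i, (Nt i).PosSemidef)
    (hblk : ∀ i, star U * N i * U = fromBlocks (single i i 1) 0 0 (Nt i))
    (a : ι → ℝ) : (∑ i, (a i : 𝕜) • N i).PosSemidef ↔ ∀ i, 0 ≤ a i := by
  refine posSemidef_sum_smul_iff (fun i => ?_) (fun i p => U p (.inl i)) (fun i j => ?_) a
  · have hE : (single i i (1 : 𝕜)).PosSemidef :=
      diagonal_single i (1 : 𝕜) ▸ PosSemidef.diagonal (Pi.single_nonneg.mpr zero_le_one)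
    rw [← (Unitary.isUnit_coe (U := ⟨U, hU⟩)).posSemidef_star_left_conjugate_iff, hblk]
    exact hE.fromBlocks_diag (hNt i)
  · rw [← conjTranspose_mul_mul_apply, ← star_eq_conjTranspose, hblk]
    simp [single_apply, eq_comm]

end Blocks

end Matrix

theorem stmt1_general (d m : ℕ) (N : Fin d → Matrix (Fin d ⊕ Fin m) (Fin d ⊕ Fin m) ℂ)
    (hSum : ∑ i, N i = 1) :
    ({a : Fin d → ℝ | (∑ i, (a i : ℂ) • N i).PosSemidef} = {a : Fin d → ℝ | ∀ i, 0 ≤ a i})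
      ↔ ∃ U ∈ Matrix.unitaryGroup (Fin d ⊕ Fin m) ℂ,
          ∃ Nt : Fin d → Matrix (Fin m) (Fin m) ℂ,
            (∀ i, (Nt i).PosSemidef) ∧
            ∀ i, star U * N i * U =
              Matrix.fromBlocks (Matrix.single i i 1) 0 0 (Nt i) := by
  refine ⟨fun h => exists_unitary_conj_eq_fromBlocks_of_posSemidef_iff hSum (Set.ext_iff.mp h), ?_⟩
  rintro ⟨U, hU, Nt, hNt, hblk⟩
  ext a
  exact posSemidef_sum_smul_iff_of_unitary_conj_eq_fromBlocks hU hNt hblk a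

theorem stmt1 (d m : ℕ) (N : Fin d → Matrix (Fin d ⊕ Fin m) (Fin d ⊕ Fin m) ℂ)
    (hHerm : ∀ i, (N i).IsHermitian) (hSum : ∑ i, N i = 1) :
    ({a : Fin d → ℝ | (∑ i, (a i : ℂ) • N i).PosSemidef} = {a : Fin d → ℝ | ∀ i, 0 ≤ a i})
      ↔ ∃ U ∈ Matrix.unitaryGroup (Fin d ⊕ Fin m) ℂ,
          ∃ Nt : Fin d → Matrix (Fin m) (Fin m) ℂ,
            (∀ i, (Nt i).PosSemidef) ∧
            ∀ i, star U * N i * U =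
              Matrix.fromBlocks (Matrix.single i i 1) 0 0 (Nt i) :=
  stmt1_general d m N hSum
end

section
/- Let D ⊂ ℝ^3 be the circular cone {(a_0,a_1,a_2) : 0 ≤ a_0, a_1²+a_2² ≤ a_0²}. If P, Q ∈ Mat_{n−1,n}(ℂ), and N_0 = P*P+Q*Q, N_1 = P*Q+Q*P, N_2 = i(Q*P−P*Q), then D = {a ∈ ℝ^3 : a_0N_0 + a_1N_1 + a_2N_2 ⪰ 0}, provided N_0 is positive definite. -/
open ComplexOrder Matrix

/-! Write `a₁ + a₂ i = r z` with `r = √(a₁² + a₂²)` and `|z| = 1`. Then the pencil equals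
`(a₀ - r) N₀ + r (zP + Q)ᴴ (zP + Q)`. The second term is positive semidefinite, and it kills a
nonzero vector `x` because `zP + Q` has more columns than rows. Since `xᴴ N₀ x > 0`, the pencil is
positive semidefinite exactly when `r ≤ a₀`. -/

namespace Matrix

variable {m n : Type*}

theorem exists_mulVec_eq_zero_of_card_lt [Fintype m] [Fintype n] {K : Type*} [Field K]
    (A : Matrix m n K) (h : Fintype.card m < Fintype.card n) : ∃ x ≠ 0, A *ᵥ x = 0 := by
  have hker : LinearMap.ker A.mulVecLin ≠ ⊥ :=
    LinearMap.ker_ne_bot_of_finrank_lt (by simpa using h)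
  obtain ⟨x, hx, hx0⟩ := (Submodule.ne_bot_iff _).mp hker
  exact ⟨x, hx0, hx⟩

theorem conjTranspose_smul_add_mul_smul_add [Fintype m] {R : Type*} [CommRing R] [StarRing R]
    (P Q : Matrix m n R) {z : R} (hz : z * star z = 1) :
    (z • P + Q)ᴴ * (z • P + Q) = Pᴴ * P + Qᴴ * Q + star z • (Pᴴ * Q) + z • (Qᴴ * P) := by
  simp only [conjTranspose_add, conjTranspose_smul, Matrix.add_mul, Matrix.mul_add,
    Matrix.smul_mul, Matrix.mul_smul, smul_add, smul_smul, hz, one_smul]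
  abel

theorem posSemidef_smul_add_smul_conjTranspose_mul_self_iff [Fintype m] [Fintype n]
    {N : Matrix n n ℂ} (hN : N.PosDef) {A : Matrix m n ℂ} (hA : ∃ x ≠ 0, A *ᵥ x = 0)
    (c : ℝ) {r : ℝ} (hr : 0 ≤ r) :
    ((c : ℂ) • N + (r : ℂ) • (Aᴴ * A)).PosSemidef ↔ 0 ≤ c := by
  constructor
  · intro h
    obtain ⟨x, hx0, hAx⟩ := hA
    have hx := h.dotProduct_mulVec_nonneg x
    simp only [add_mulVec, smul_mulVec, ← mulVec_mulVec, hAx, mulVec_zero, smul_zero, add_zero,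
      dotProduct_smul, smul_eq_mul] at hx
    have hre := (Complex.nonneg_iff.mp hx).1
    rw [Complex.re_ofReal_mul] at hre
    exact nonneg_of_mul_nonneg_left hre (Complex.pos_iff.mp (hN.dotProduct_mulVec_pos hx0)).1
  · intro hc
    exact (hN.posSemidef.smul (Complex.zero_le_real.mpr hc)).add
      ((posSemidef_conjTranspose_mul_self A).smul (Complex.zero_le_real.mpr hr))

theorem pencil_eq_smul_add_smul_conjTranspose_mul_self [Fintype m] (P Q : Matrix m n ℂ)
    (a₀ a₁ a₂ r : ℝ) {z : ℂ} (hz : z * star z = 1) (hw : (a₁ + a₂ * Complex.I : ℂ) = r * z) :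
    (a₀ : ℂ) • (Pᴴ * P + Qᴴ * Q) + (a₁ : ℂ) • (Pᴴ * Q + Qᴴ * P)
        + (a₂ : ℂ) • (Complex.I • (Qᴴ * P - Pᴴ * Q))
      = ((a₀ - r : ℝ) : ℂ) • (Pᴴ * P + Qᴴ * Q) + (r : ℂ) • ((z • P + Q)ᴴ * (z • P + Q)) := by
  have hw' : (a₁ - a₂ * Complex.I : ℂ) = r * star z := by
    simpa [Complex.conj_ofReal, sub_eq_add_neg] using congrArg star hw
  rw [conjTranspose_smul_add_mul_smul_add P Q hz]
  push_cast
  match_scalars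
  · ring
  · ring
  · linear_combination hw'
  · linear_combination hw

end Matrix

theorem stmt4 (n : ℕ) (P Q : Matrix (Fin n) (Fin (n + 1)) ℂ)
    (hpd : (Pᴴ * P + Qᴴ * Q).PosDef) :
    ∀ a₀ a₁ a₂ : ℝ,
      (0 ≤ a₀ ∧ a₁ ^ 2 + a₂ ^ 2 ≤ a₀ ^ 2) ↔
      ((a₀ : ℂ) • (Pᴴ * P + Qᴴ * Q) + (a₁ : ℂ) • (Pᴴ * Q + Qᴴ * P)
        + (a₂ : ℂ) • (Complex.I • (Qᴴ * P - Pᴴ * Q))).PosSemidef := by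
  intro a₀ a₁ a₂
  set w : ℂ := a₁ + a₂ * Complex.I
  set z : ℂ := Complex.exp (w.arg * Complex.I)
  have hz : z * star z = 1 := by
    simp [z, Complex.mul_conj', Complex.norm_exp_ofReal_mul_I]
  have hnorm : ‖w‖ ^ 2 = a₁ ^ 2 + a₂ ^ 2 := by
    rw [Complex.sq_norm, Complex.normSq_add_mul_I]
  rw [pencil_eq_smul_add_smul_conjTranspose_mul_self P Q a₀ a₁ a₂ ‖w‖ hz
      (Complex.norm_mul_exp_arg_mul_I w).symm,
    posSemidef_smul_add_smul_conjTranspose_mul_self_iff hpd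
      ((z • P + Q).exists_mulVec_eq_zero_of_card_lt (by simp)) _ (norm_nonneg w),
    sub_nonneg, ← hnorm]
  constructor
  · rintro ⟨ha₀, hle⟩
    exact (pow_le_pow_iff_left₀ (norm_nonneg w) ha₀ two_ne_zero).mp hle
  · intro hle
    exact ⟨(norm_nonneg w).trans hle, pow_le_pow_left₀ (norm_nonneg w) hle 2⟩
end

section
/- Let D be the circular cone in ℝ^3 and M_1 = diag(1,−1), M_2 = [[0,1],[1,0]], M_3 = [[0,i],[−i,0]]. Let N_0, N_1, N_2 be n×n Hermitian matrices of the form N_0 = P*P+Q*Q, N_1 = P*Q+Q*P, N_2 = i(Q*P−P*Q) for some P,Q ∈ Mat_{r,n}(ℂ). Then with N_3 := P*P − Q*Q, the matrix N_0⊗I_2 + N_1⊗M_1 + N_2⊗M_2 + N_3⊗M_3 is positive semidefinite. -/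
/-!
The matrix is `AᴴA` for `A = [P + Q, i(P - Q)] = (P + Q) ⊗ e₁ᵀ + i(P - Q) ⊗ e₂ᵀ`. Indeed, in the
matrix units `Eₐᵦ` of `M₂(ℂ)` the Pauli-type sum `N₀ ⊗ 1 + N₁ ⊗ M₁ + N₂ ⊗ M₂ + N₃ ⊗ M₃` has blocks
`N₀ ± N₁` on the diagonal and `N₂ ± iN₃` off it, and for the given `Nₖ` these are exactly the
blocks `(P + Q)ᴴ(P + Q)`, `(P + Q)ᴴ(i(P - Q))`, … of `AᴴA`.
-/

open ComplexOrder Matrix Kronecker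

theorem Matrix.conjTranspose_mul_self_add_kronecker_single {R : Type*} [CommRing R] [StarRing R]
    {m n ι κ : Type*} [Fintype m] [Fintype ι] [DecidableEq ι] [DecidableEq κ]
    (X Y : Matrix m n R) (i : ι) (a b : κ) :
    (X ⊗ₖ single i a 1 + Y ⊗ₖ single i b 1)ᴴ * (X ⊗ₖ single i a 1 + Y ⊗ₖ single i b 1) =
      (Xᴴ * X) ⊗ₖ single a a 1 + (Xᴴ * Y) ⊗ₖ single a b 1
        + (Yᴴ * X) ⊗ₖ single b a 1 + (Yᴴ * Y) ⊗ₖ single b b 1 := by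
  simp only [conjTranspose_add, conjTranspose_kronecker, conjTranspose_single, star_one,
    Matrix.add_mul, Matrix.mul_add, ← mul_kronecker_mul, single_mul_single_same, mul_one]
  abel

theorem Matrix.sum_kronecker_pauli_eq_sum_kronecker_single {m n : Type*}
    (N₀ N₁ N₂ N₃ : Matrix m n ℂ) :
    N₀ ⊗ₖ (1 : Matrix (Fin 2) (Fin 2) ℂ) + N₁ ⊗ₖ !![(1 : ℂ), 0; 0, -1] + N₂ ⊗ₖ !![(0 : ℂ), 1; 1, 0]
      + N₃ ⊗ₖ !![(0 : ℂ), Complex.I; -Complex.I, 0] =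
      (N₀ + N₁) ⊗ₖ single 0 0 1 + (N₂ + Complex.I • N₃) ⊗ₖ single 0 1 1
        + (N₂ - Complex.I • N₃) ⊗ₖ single 1 0 1 + (N₀ - N₁) ⊗ₖ single 1 1 1 := by
  ext ⟨i, s⟩ ⟨j, t⟩
  fin_cases s <;> fin_cases t <;> simp <;> ring

theorem stmt6 (r n : ℕ) (P Q : Matrix (Fin r) (Fin n) ℂ) :
    ((Pᴴ * P + Qᴴ * Q) ⊗ₖ (1 : Matrix (Fin 2) (Fin 2) ℂ)
      + (Pᴴ * Q + Qᴴ * P) ⊗ₖ !![(1 : ℂ), 0; 0, -1]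
      + (Complex.I • (Qᴴ * P - Pᴴ * Q)) ⊗ₖ !![(0 : ℂ), 1; 1, 0]
      + (Pᴴ * P - Qᴴ * Q) ⊗ₖ !![(0 : ℂ), Complex.I; -Complex.I, 0]).PosSemidef := by
  set X := P + Q
  set Y := Complex.I • (P - Q)
  have hXX : Pᴴ * P + Qᴴ * Q + (Pᴴ * Q + Qᴴ * P) = Xᴴ * X := by
    simp only [X, conjTranspose_add, Matrix.add_mul, Matrix.mul_add]
    abel
  have hXY : Complex.I • (Qᴴ * P - Pᴴ * Q) + Complex.I • (Pᴴ * P - Qᴴ * Q) = Xᴴ * Y := by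
    simp only [X, Y, conjTranspose_add, Matrix.add_mul, Matrix.mul_smul, Matrix.mul_sub]
    module
  have hYX : Complex.I • (Qᴴ * P - Pᴴ * Q) - Complex.I • (Pᴴ * P - Qᴴ * Q) = Yᴴ * X := by
    simp only [X, Y, conjTranspose_smul, Complex.star_def, Complex.conj_I, conjTranspose_sub,
      Matrix.smul_mul, Matrix.sub_mul, Matrix.mul_add]
    module
  have hYY : Pᴴ * P + Qᴴ * Q - (Pᴴ * Q + Qᴴ * P) = Yᴴ * Y := by
    have hI : star Complex.I * Complex.I = 1 := by simp
    simp only [Y]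
    rw [conjTranspose_smul, Matrix.smul_mul, Matrix.mul_smul, smul_smul, hI, one_smul]
    simp only [conjTranspose_sub, Matrix.sub_mul, Matrix.mul_sub]
    abel
  rw [sum_kronecker_pauli_eq_sum_kronecker_single, hXX, hXY, hYX, hYY,
    ← conjTranspose_mul_self_add_kronecker_single X Y (0 : Fin 1)]
  exact posSemidef_conjTranspose_mul_self _
end

section
/- Let N_0,N_1,N_2,N_3 be n×n Hermitian matrices with N_0⊗I_2 + N_1⊗M_1 + N_2⊗M_2 + N_3⊗M_3 ⪰ 0, where M_1 = diag(1,−1), M_2 = [[0,1],[1,0]], M_3 = [[0,i],[−i,0]]. Then there exist matrices P, Q (of some size r×n) with N_0 = P*P+Q*Q, N_1 = P*Q+Q*P, N_2 = i(Q*P−P*Q). -/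
/-!
Write the positive semidefinite matrix as `Bᴴ * B` and let `U`, `V` be the columns of `B` with
second index `0` and `1`. The `2 × 2` blocks of `Bᴴ * B` give `Uᴴ U = N₀ + N₁`,
`Vᴴ V = N₀ - N₁` and `Uᴴ V + Vᴴ U = 2 N₂`, and `P = (U - iV)/2`, `Q = (U + iV)/2` recombine
these into the required identities.
-/
open ComplexOrder Matrix Kronecker

namespace Matrix

theorem PosSemidef.exists_fin_eq_conjTranspose_mul {𝕜 n : Type*} [RCLike 𝕜] [Fintype n]
    [DecidableEq n] {X : Matrix n n 𝕜} (hX : X.PosSemidef) :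
    ∃ (r : ℕ) (B : Matrix (Fin r) n 𝕜), X = Bᴴ * B := by
  open scoped MatrixOrder in
  obtain ⟨B, rfl⟩ := CStarAlgebra.nonneg_iff_eq_star_mul_self.mp hX.nonneg
  exact ⟨Fintype.card n, B.submatrix (Fintype.equivFin n).symm id,
    by simp [conjTranspose_submatrix, star_eq_conjTranspose]⟩

theorem kronecker_submatrix_prodMk {l m n p α : Type*} [CommMagma α] (A : Matrix l m α)
    (M : Matrix n p α) (a : n) (b : p) :
    (A ⊗ₖ M).submatrix (·, a) (·, b) = M a b • A := by
  ext i j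
  simp [mul_comm]

theorem submatrix_conjTranspose_mul_self {l m n α : Type*} [Fintype m] [AddCommMonoid α]
    [Mul α] [Star α] (B : Matrix m n α) (f g : l → n) :
    (Bᴴ * B).submatrix f g = (B.submatrix id f)ᴴ * B.submatrix id g := by
  rw [submatrix_mul _ _ _ _ _ Function.bijective_id, conjTranspose_submatrix]

theorem exists_conjTranspose_mul_polarization {m n : Type*} [Fintype m] (U V : Matrix m n ℂ) :
    ∃ P Q : Matrix m n ℂ,
      Pᴴ * P + Qᴴ * Q = (1/2 : ℂ) • (Uᴴ * U + Vᴴ * V) ∧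
      Pᴴ * Q + Qᴴ * P = (1/2 : ℂ) • (Uᴴ * U - Vᴴ * V) ∧
      Complex.I • (Qᴴ * P - Pᴴ * Q) = (1/2 : ℂ) • (Uᴴ * V + Vᴴ * U) := by
  refine ⟨(1/2 : ℂ) • (U - Complex.I • V), (1/2 : ℂ) • (U + Complex.I • V), ?_, ?_, ?_⟩
  all_goals
    simp only [conjTranspose_smul, conjTranspose_sub, conjTranspose_add, Matrix.mul_sub,
      Matrix.sub_mul, Matrix.mul_add, Matrix.add_mul, Matrix.smul_mul, Matrix.mul_smul, smul_smul,
      Complex.star_def, Complex.conj_I, map_div₀, map_one, map_ofNat]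
    match_scalars <;> ring_nf <;> simp only [Complex.I_sq] <;> norm_num

end Matrix

theorem stmt7_general (n : ℕ) (N₀ N₁ N₂ N₃ : Matrix (Fin n) (Fin n) ℂ)
    (hpsd : (N₀ ⊗ₖ (1 : Matrix (Fin 2) (Fin 2) ℂ)
      + N₁ ⊗ₖ !![(1 : ℂ), 0; 0, -1]
      + N₂ ⊗ₖ !![(0 : ℂ), 1; 1, 0]
      + N₃ ⊗ₖ !![(0 : ℂ), Complex.I; -Complex.I, 0]).PosSemidef) :
    ∃ (r : ℕ) (P Q : Matrix (Fin r) (Fin n) ℂ),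
      N₀ = Pᴴ * P + Qᴴ * Q ∧ N₁ = Pᴴ * Q + Qᴴ * P ∧
      N₂ = Complex.I • (Qᴴ * P - Pᴴ * Q) := by
  obtain ⟨r, B, hB⟩ := hpsd.exists_fin_eq_conjTranspose_mul
  have hblock (a b : Fin 2) := congrArg (submatrix · (·, a) (·, b)) hB
  simp only [submatrix_conjTranspose_mul_self, submatrix_add, Pi.add_apply,
    kronecker_submatrix_prodMk, Fin.forall_fin_two, one_apply, ite_smul, one_smul, zero_smul,
    of_apply, cons_val', cons_val_fin_one, cons_val_zero, cons_val_one, ↓reduceIte, add_zero,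
    zero_add, zero_ne_one, one_ne_zero, neg_smul] at hblock
  obtain ⟨⟨h₀₀, h₀₁⟩, h₁₀, h₁₁⟩ := hblock
  obtain ⟨P, Q, hsum, hcross, hdiff⟩ :=
    exists_conjTranspose_mul_polarization (B.submatrix id (·, 0)) (B.submatrix id (·, 1))
  refine ⟨r, P, Q, ?_, ?_, ?_⟩
  · rw [hsum, ← h₀₀, ← h₁₁]; module
  · rw [hcross, ← h₀₀, ← h₁₁]; module
  · rw [hdiff, ← h₀₁, ← h₁₀]; module

theorem stmt7 (n : ℕ) (N₀ N₁ N₂ N₃ : Matrix (Fin n) (Fin n) ℂ)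
    (h₀ : N₀.IsHermitian) (h₁ : N₁.IsHermitian) (h₂ : N₂.IsHermitian) (h₃ : N₃.IsHermitian)
    (hpsd : (N₀ ⊗ₖ (1 : Matrix (Fin 2) (Fin 2) ℂ)
      + N₁ ⊗ₖ !![(1 : ℂ), 0; 0, -1]
      + N₂ ⊗ₖ !![(0 : ℂ), 1; 1, 0]
      + N₃ ⊗ₖ !![(0 : ℂ), Complex.I; -Complex.I, 0]).PosSemidef) :
    ∃ (r : ℕ) (P Q : Matrix (Fin r) (Fin n) ℂ),
      N₀ = Pᴴ * P + Qᴴ * Q ∧ N₁ = Pᴴ * Q + Qᴴ * P ∧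
      N₂ = Complex.I • (Qᴴ * P - Pᴴ * Q) :=
  stmt7_general n N₀ N₁ N₂ N₃ hpsd
end

section
/- Let N_1, N_2 be n×n Hermitian matrices with N_2 diagonal with diagonal entries d_1,...,d_n. Suppose: (1) for all real λ, the matrix N_1 + I_n + λN_2 ⪰ 0 implies λ = 0, and N_1 + I_n ⪰ 0; and (2) the 2n×2n block matrix [[I_n, N_2/√2],[N_2/√2, I_n+N_1]] is positive semidefinite. Then a contradiction follows; i.e., conditions (1) and (2) cannot hold simultaneously. -/
open ComplexOrder Matrix

theorem stmt11 (n : ℕ) (N₁ : Matrix (Fin n) (Fin n) ℂ) (hHerm : N₁.IsHermitian)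
    (dv : Fin n → ℝ)
    (h1 : (∀ l : ℝ,
        (N₁ + 1 + (l : ℂ) • Matrix.diagonal (fun i => (dv i : ℂ))).PosSemidef → l = 0)
        ∧ (N₁ + 1).PosSemidef)
    (h2 : (Matrix.fromBlocks 1
        (((1 / Real.sqrt 2 : ℝ) : ℂ) • Matrix.diagonal (fun i => (dv i : ℂ)))
        (((1 / Real.sqrt 2 : ℝ) : ℂ) • Matrix.diagonal (fun i => (dv i : ℂ)))
        (1 + N₁)).PosSemidef) :
    False := by
  obtain ⟨h1a, h1b⟩ := h1
  set N₂ : Matrix (Fin n) (Fin n) ℂ := Matrix.diagonal (fun i => (dv i : ℂ)) with hN₂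
  by_cases hd : ∀ i, dv i = 0
  · have hz : N₂ = 0 := by
      rw [hN₂]
      have : (fun i => (dv i : ℂ)) = fun _ => 0 := funext fun i => by simp [hd i]
      rw [this, Matrix.diagonal_zero]
    have : (N₁ + 1 + ((1:ℝ) : ℂ) • N₂).PosSemidef := by
      simpa [hz] using h1b
    exact one_ne_zero (h1a 1 this)
  · push_neg at hd
    set c : ℂ := ((1 / Real.sqrt 2 : ℝ) : ℂ) with hc
    have hB : (c • N₂)ᴴ = c • N₂ := by
      have hNh : N₂ᴴ = N₂ := by
        rw [hN₂, Matrix.diagonal_conjTranspose]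
        congr 1
        funext i
        simp [Pi.star_def, Function.comp, Complex.star_def, Complex.conj_ofReal]
      rw [Matrix.conjTranspose_smul, hNh, hc, Complex.star_def, Complex.conj_ofReal]
    -- Schur complement
    have hschur : ((1 + N₁) - (c • N₂)ᴴ * (1 : Matrix (Fin n) (Fin n) ℂ)⁻¹ * (c • N₂)).PosSemidef := by
      have hA : (1 : Matrix (Fin n) (Fin n) ℂ).PosDef := Matrix.PosDef.one
      haveI : Invertible (1 : Matrix (Fin n) (Fin n) ℂ) := invertibleOne
      rw [← Matrix.PosDef.fromBlocks₁₁ (c • N₂) (1 + N₁) hA]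
      rw [hB]
      exact h2
    have hc2 : c * c = (1/2 : ℂ) := by
      rw [hc, ← Complex.ofReal_mul, div_mul_div_comm, one_mul,
        Real.mul_self_sqrt (by norm_num)]
      norm_num
    have hsq : (c • N₂) * (c • N₂) = Matrix.diagonal (fun i => ((dv i)^2/2 : ℂ)) := by
      rw [Matrix.smul_mul, Matrix.mul_smul, smul_smul, hc2, hN₂, Matrix.diagonal_mul_diagonal]
      ext i j
      rcases eq_or_ne i j with rfl | hij
      · simp; ring
      · simp [Matrix.diagonal_apply_ne _ hij]
    have hS : ((1 + N₁) - (c • N₂)ᴴ * (1 : Matrix (Fin n) (Fin n) ℂ)⁻¹ * (c • N₂))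
        = (1 + N₁) - Matrix.diagonal (fun i => ((dv i)^2/2 : ℂ)) := by
      rw [hB, inv_one, Matrix.mul_one, hsq]
    rw [hS] at hschur
    -- choose l
    set S : Finset (Fin n) := Finset.univ.filter (fun i => dv i ≠ 0) with hSdef
    have hSne : S.Nonempty := by
      obtain ⟨i, hi⟩ := hd
      exact ⟨i, by simp [hSdef, hi]⟩
    set l : ℝ := S.inf' hSne (fun i => |dv i| / 2) with hl
    have hlpos : 0 < l := by
      rw [hl]
      apply Finset.lt_inf'_iff hSne |>.mpr
      intro i hi
      have : dv i ≠ 0 := by simpa [hSdef] using hi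
      positivity
    have hkey : ∀ i, 0 ≤ ((dv i)^2/2 + l * dv i : ℝ) := by
      intro i
      by_cases h0 : dv i = 0
      · simp [h0]
      · have hle : l ≤ |dv i| / 2 :=
          Finset.inf'_le _ (by simp [hSdef, h0])
        have h1 : l * |dv i| ≤ (dv i)^2 / 2 := by
          calc l * |dv i| ≤ (|dv i| / 2) * |dv i| := by
                apply mul_le_mul_of_nonneg_right hle (abs_nonneg _)
            _ = (dv i)^2 / 2 := by rw [div_mul_eq_mul_div, ← sq, sq_abs]
        have h2 : -(l * |dv i|) ≤ l * dv i := by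
          rw [neg_le]
          calc -(l * dv i) = l * (-dv i) := by ring
            _ ≤ l * |dv i| := by
                apply mul_le_mul_of_nonneg_left _ hlpos.le
                exact neg_le_abs _
        linarith
    have hdiag : (Matrix.diagonal (fun i => ((dv i)^2/2 + l * dv i : ℂ))).PosSemidef := by
      rw [Matrix.posSemidef_diagonal_iff]
      intro i
      have h := Complex.zero_le_real.mpr (hkey i)
      push_cast at h
      exact h
    have hsum : (N₁ + 1 + (l : ℂ) • N₂).PosSemidef := by
      have heq : N₁ + 1 + (l : ℂ) • N₂
          = ((1 + N₁) - Matrix.diagonal (fun i => ((dv i)^2/2 : ℂ)))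
            + Matrix.diagonal (fun i => ((dv i)^2/2 + l * dv i : ℂ)) := by
        rw [hN₂, ← Matrix.diagonal_smul]
        ext i j
        by_cases hij : i = j <;> simp [hij, Matrix.diagonal, Matrix.one_apply] <;> ring
      rw [heq]
      exact hschur.add hdiag
    exact hlpos.ne' (h1a l hsum)
end

section
/- Let φ : Mat_d(ℂ) → Mat_r(ℂ) be a unital *-linear map such that for all Hermitian A, A ⪰ 0 iff φ(A) ⪰ 0. Suppose there is a unitary U ∈ Mat_r(ℂ) such that for all A, U*φ(A)U = [[A, γ(A)*],[γ(A), ψ(A)]] for some linear maps γ : Mat_d(ℂ) → Mat_{r−d,d}(ℂ) and ψ : Mat_d(ℂ) → Mat_{r−d}(ℂ) with ψ unital. Then γ = 0. -/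
/-!
The block matrix `[[A, γ(A)ᴴ], [γ(A), ψ(A)]] = U⋆ φ(A) U` is positive semidefinite whenever `A`
is, and in a positive semidefinite block matrix the lower-left block kills the kernel of the
upper-left one. For `P = v v⋆` and `Q = ‖v‖² 1 - P`, both positive semidefinite with
`P Q = Q P = 0`, this gives `γ(P) Q = 0` and, since unitality of `φ` forces `γ(1) = 0` and hence
`γ(Q) = -γ(P)`, also `γ(P) P = 0`; adding, `‖v‖² γ(P) = 0`. By polarization the matrices `v v⋆`
span all matrices.
-/

open ComplexOrder Matrix

namespace Matrix

section PosSemidef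

variable {𝕜 n m k : Type*} [RCLike 𝕜] [Fintype n] [Fintype m]

theorem PosSemidef.mulVec_eq_zero_of_fromBlocks {B : Matrix n n 𝕜} {C : Matrix m n 𝕜}
    {D : Matrix m m 𝕜} (h : (fromBlocks B Cᴴ C D).PosSemidef) {x : n → 𝕜}
    (hx : B *ᵥ x = 0) : C *ᵥ x = 0 := by
  have hz : fromBlocks B Cᴴ C D *ᵥ Sum.elim x 0 = Sum.elim (0 : n → 𝕜) (C *ᵥ x) := by
    simp [fromBlocks_mulVec, hx]
  have hz0 := (h.dotProduct_mulVec_zero_iff (Sum.elim x 0)).mp (by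
    simp [hz, dotProduct, Fintype.sum_sum_type])
  rw [hz] at hz0
  exact funext fun i => congrFun hz0 (Sum.inr i)

theorem PosSemidef.mul_eq_zero_of_fromBlocks {B : Matrix n n 𝕜}
    {C : Matrix m n 𝕜} {D : Matrix m m 𝕜} (h : (fromBlocks B Cᴴ C D).PosSemidef)
    {X : Matrix n k 𝕜} (hBX : B * X = 0) : C * X = 0 :=
  Matrix.ext fun i j => congrFun (h.mulVec_eq_zero_of_fromBlocks (x := fun l => X l j)
    (funext fun i' => congrFun (congrFun hBX i') j)) i

theorem PosSemidef.of_mul_self_eq_smul {Q : Matrix n n 𝕜} (hQ : Q.IsHermitian) {c : 𝕜}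
    (hc : 0 < c) (hQQ : Q * Q = c • Q) : Q.PosSemidef := by
  have hQ' : Q = c⁻¹ • (Qᴴ * Q) := by
    rw [hQ.eq, hQQ, smul_smul, inv_mul_cancel₀ hc.ne', one_smul]
  rw [hQ']
  exact (posSemidef_conjTranspose_mul_self Q).smul (RCLike.inv_pos_of_pos hc).le

end PosSemidef

theorem _root_.LinearMap.eq_zero_of_map_vecMulVec_self_star {n M : Type*} [Fintype n]
    [DecidableEq n] [AddCommGroup M] [Module ℂ M] (f : Matrix n n ℂ →ₗ[ℂ] M)
    (hf : ∀ v : n → ℂ, f (vecMulVec v (star v)) = 0) : f = 0 := by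
  have hpol : ∀ x y : n → ℂ, f (vecMulVec x (star y)) = 0 := by
    intro x y
    have h₁ := hf (x + y)
    have h₂ := hf (x + Complex.I • y)
    simp only [add_vecMulVec, vecMulVec_add, star_add, star_smul, vecMulVec_smul, smul_vecMulVec,
      map_add, map_smul, hf x, hf y, Complex.star_def, Complex.conj_I] at h₁ h₂
    simp only [zero_add, add_zero, smul_zero, neg_smul] at h₁ h₂
    linear_combination (norm := match_scalars <;> ring_nf <;> simp [Complex.I_sq])
      (1 / 2 : ℂ) • h₁ + (Complex.I / 2) • h₂
  refine Matrix.ext_linearMap ℂ fun i j => LinearMap.ext_ring ?_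
  simpa [single_eq_single_vecMulVec_single] using hpol (Pi.single i 1) (Pi.single j 1)

theorem map_vecMulVec_self_star_eq_zero_of_posSemidef_fromBlocks {n m : Type*} [Fintype n] [DecidableEq n] [Fintype m]
    (γ : Matrix n n ℂ →ₗ[ℂ] Matrix m n ℂ) (ψ : Matrix n n ℂ → Matrix m m ℂ) (hγ : γ 1 = 0)
    (hpsd : ∀ A : Matrix n n ℂ, A.PosSemidef → (fromBlocks A (γ A)ᴴ (γ A) (ψ A)).PosSemidef)
    (v : n → ℂ) : γ (vecMulVec v (star v)) = 0 := by
  rcases eq_or_ne v 0 with rfl | hv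
  · simp
  set c := star v ⬝ᵥ v
  have hc : 0 < c := dotProduct_star_self_pos_iff.mpr hv
  set P := vecMulVec v (star v)
  set Q := c • 1 - P
  have hPP : P * P = c • P := by
    simp only [P, c, vecMulVec_mul_vecMulVec, vecMulVec_smul]
  have hPQ : P * Q = 0 := by simp [Q, mul_sub, hPP]
  have hQP : Q * P = 0 := by simp [Q, sub_mul, hPP]
  have hQ : Q.PosSemidef := by
    refine .of_mul_self_eq_smul ?_ hc ?_
    · exact (isHermitian_one.smul (IsSelfAdjoint.of_nonneg hc.le)).sub
        (posSemidef_vecMulVec_self_star v).isHermitian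
    · simp [Q, sub_mul, mul_sub, hPP]
  have hγQ : γ Q = -γ P := by simp [Q, hγ]
  have h₁ : γ P * Q = 0 :=
    (hpsd P (posSemidef_vecMulVec_self_star v)).mul_eq_zero_of_fromBlocks hPQ
  have h₂ : γ P * P = 0 := by
    simpa [hγQ] using (hpsd Q hQ).mul_eq_zero_of_fromBlocks hQP
  have hcγ : c • γ P = 0 := calc
    c • γ P = γ P * (P + Q) := by simp [Q]
    _ = 0 := by rw [Matrix.mul_add, h₁, h₂, add_zero]
  exact (smul_eq_zero.mp hcγ).resolve_left hc.ne'

end Matrix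

theorem stmt13_general (d m : ℕ)
    (φ : Matrix (Fin d) (Fin d) ℂ →ₗ[ℂ] Matrix (Fin d ⊕ Fin m) (Fin d ⊕ Fin m) ℂ)
    (hunital : φ 1 = 1)
    (hiso : ∀ A : Matrix (Fin d) (Fin d) ℂ, A.IsHermitian →
      (A.PosSemidef ↔ (φ A).PosSemidef))
    (U : Matrix (Fin d ⊕ Fin m) (Fin d ⊕ Fin m) ℂ)
    (hU : U ∈ Matrix.unitaryGroup (Fin d ⊕ Fin m) ℂ)
    (γ : Matrix (Fin d) (Fin d) ℂ →ₗ[ℂ] Matrix (Fin m) (Fin d) ℂ)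
    (ψ : Matrix (Fin d) (Fin d) ℂ →ₗ[ℂ] Matrix (Fin m) (Fin m) ℂ)
    (hblock : ∀ A, star U * φ A * U = Matrix.fromBlocks A (γ A)ᴴ (γ A) (ψ A)) :
    γ = 0 := by
  have hγ : γ 1 = 0 := by
    have h := hblock 1
    rw [hunital, Matrix.mul_one, (Unitary.mem_iff.mp hU).1, ← fromBlocks_one] at h
    exact (fromBlocks_inj.mp h.symm).2.2.1
  have hpsd : ∀ A, A.PosSemidef → (fromBlocks A (γ A)ᴴ (γ A) (ψ A)).PosSemidef := by
    intro A hA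
    rw [← hblock A, star_eq_conjTranspose]
    exact ((hiso A hA.isHermitian).mp hA).conjTranspose_mul_mul_same U
  exact γ.eq_zero_of_map_vecMulVec_self_star
    (map_vecMulVec_self_star_eq_zero_of_posSemidef_fromBlocks γ ψ hγ hpsd)

theorem stmt13 (d m : ℕ)
    (φ : Matrix (Fin d) (Fin d) ℂ →ₗ[ℂ] Matrix (Fin d ⊕ Fin m) (Fin d ⊕ Fin m) ℂ)
    (hstar : ∀ A, φ Aᴴ = (φ A)ᴴ) (hunital : φ 1 = 1)
    (hiso : ∀ A : Matrix (Fin d) (Fin d) ℂ, A.IsHermitian →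
      (A.PosSemidef ↔ (φ A).PosSemidef))
    (U : Matrix (Fin d ⊕ Fin m) (Fin d ⊕ Fin m) ℂ)
    (hU : U ∈ Matrix.unitaryGroup (Fin d ⊕ Fin m) ℂ)
    (γ : Matrix (Fin d) (Fin d) ℂ →ₗ[ℂ] Matrix (Fin m) (Fin d) ℂ)
    (ψ : Matrix (Fin d) (Fin d) ℂ →ₗ[ℂ] Matrix (Fin m) (Fin m) ℂ)
    (hψ : ψ 1 = 1)
    (hblock : ∀ A, star U * φ A * U = Matrix.fromBlocks A (γ A)ᴴ (γ A) (ψ A)) :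
    γ = 0 :=
  stmt13_general d m φ hunital hiso U hU γ ψ hblock
end

section
/- For d ≥ 2, define φ : Mat_d(ℂ) → Mat_{2d−1}(ℂ) by sending the block matrix [[a, bᵗ],[c, B]] (with a ∈ ℂ, b,c ∈ ℂ^{d−1}, B ∈ Mat_{d−1}(ℂ)) to the block matrix [[a, bᵗ/√2, cᵗ/√2],[c/√2, B, 0],[b/√2, 0, Bᵗ]]. Then φ is unital, *-linear, and for every Hermitian A ∈ Her_d(ℂ): A ⪰ 0 if and only if φ(A) ⪰ 0. -/
open ComplexOrder Matrix

/-- The map φ from the example: sends [[a, bᵗ],[c, B]] to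
[[a, bᵗ/√2, cᵗ/√2],[c/√2, B, 0],[b/√2, 0, Bᵗ]]. Here d = m + 1. -/
noncomputable def phiEx (m : ℕ) (A : Matrix (Unit ⊕ Fin m) (Unit ⊕ Fin m) ℂ) :
    Matrix ((Unit ⊕ Fin m) ⊕ Fin m) ((Unit ⊕ Fin m) ⊕ Fin m) ℂ :=
  Matrix.fromBlocks
    (Matrix.of fun i j =>
      match i, j with
      | Sum.inl _, Sum.inl _ => A (Sum.inl ()) (Sum.inl ())
      | Sum.inl _, Sum.inr j' => A (Sum.inl ()) (Sum.inr j') / (Real.sqrt 2 : ℂ)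
      | Sum.inr i', Sum.inl _ => A (Sum.inr i') (Sum.inl ()) / (Real.sqrt 2 : ℂ)
      | Sum.inr i', Sum.inr j' => A (Sum.inr i') (Sum.inr j'))
    (Matrix.of fun i j =>
      match i with
      | Sum.inl _ => A (Sum.inr j) (Sum.inl ()) / (Real.sqrt 2 : ℂ)
      | Sum.inr _ => 0)
    (Matrix.of fun i j =>
      match j with
      | Sum.inl _ => A (Sum.inl ()) (Sum.inr i) / (Real.sqrt 2 : ℂ)
      | Sum.inr _ => 0)
    (Matrix.of fun i j => A (Sum.inr j) (Sum.inr i))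

/-!
Writing `V, W : ℂ^{2d-1} → ℂ^d` for the maps `(y₀, y', y'') ↦ (y₀/√2, y')` and
`(y₀, y', y'') ↦ (y₀/√2, y'')`, one has `φ(A) = V*AV + W*AᵀW`. Hence `A ⪰ 0` gives `φ(A) ⪰ 0`.
Conversely, to test `x*Ax ≥ 0` we may rotate `x` by a phase so that `x₀` is real; then
`y = (√2 x₀, x', x̄')` satisfies `Vy = x` and `Wy = x̄`, so `y*φ(A)y = x*Ax + x̄*Aᵀx̄ = 2 x*Ax`.
-/

namespace Matrix

variable {n R : Type*} [Fintype n] [CommSemiring R] [StarRing R]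

theorem star_dotProduct_transpose_mulVec (A : Matrix n n R) (w : n → R) :
    star w ⬝ᵥ Aᵀ *ᵥ w = star (star w) ⬝ᵥ A *ᵥ star w := by
  rw [mulVec_transpose, dotProduct_comm, ← dotProduct_mulVec, star_star]

theorem star_dotProduct_conjTranspose_mul_mul_mulVec {k : Type*} [Fintype k]
    (A : Matrix n n R) (B : Matrix n k R) (y : k → R) :
    star y ⬝ᵥ (Bᴴ * A * B) *ᵥ y = star (B *ᵥ y) ⬝ᵥ A *ᵥ (B *ᵥ y) := by
  rw [← mulVec_mulVec, ← mulVec_mulVec, dotProduct_mulVec, ← star_mulVec]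

theorem star_smul_dotProduct_mulVec_smul (A : Matrix n n R) (s : R) (x : n → R) :
    star (s • x) ⬝ᵥ A *ᵥ (s • x) = (star s * s) • (star x ⬝ᵥ A *ᵥ x) := by
  rw [star_smul, mulVec_smul, smul_dotProduct, dotProduct_smul, smul_smul]

theorem IsHermitian.posSemidef_of_forall_real_apply {A : Matrix n n ℂ} (hA : A.IsHermitian)
    (i : n) (h : ∀ x : n → ℂ, star (x i) = x i → 0 ≤ star x ⬝ᵥ A *ᵥ x) : A.PosSemidef := by
  refine PosSemidef.of_dotProduct_mulVec_nonneg hA fun x => ?_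
  obtain ⟨s, hs, hsx⟩ := Complex.exists_norm_eq_mul_self (x i)
  have hunit : star s * s = 1 := by
    rw [Complex.star_def, Complex.conj_mul', hs]; norm_num
  have hreal : star ((s • x) i) = (s • x) i := by
    rw [Pi.smul_apply, smul_eq_mul, ← hsx, Complex.star_def, Complex.conj_ofReal]
  simpa only [star_smul_dotProduct_mulVec_smul, hunit, one_smul] using h (s • x) hreal

end Matrix

theorem Complex.nonneg_of_nonneg_add_self {z : ℂ} (h : 0 ≤ z + z) : 0 ≤ z := by
  have h2 : (0 : ℂ) ≤ 2⁻¹ := by rw [Complex.le_def]; norm_num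
  simpa [← two_mul, ← mul_assoc] using mul_nonneg h2 h

theorem Complex.ofReal_sqrt_two_inv_mul_inv_mul (z : ℂ) :
    ((Real.sqrt 2 : ℂ))⁻¹ * (((Real.sqrt 2 : ℂ))⁻¹ * z) = z / 2 := by
  rw [← mul_assoc, ← mul_inv, ← Complex.ofReal_mul, Real.mul_self_sqrt zero_le_two]
  push_cast
  ring

noncomputable def phiExV (m : ℕ) : Matrix (Unit ⊕ Fin m) ((Unit ⊕ Fin m) ⊕ Fin m) ℂ :=
  Matrix.of fun i j =>
    match i, j with
    | Sum.inl _, Sum.inl (Sum.inl _) => ((Real.sqrt 2 : ℂ))⁻¹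
    | Sum.inr i', Sum.inl (Sum.inr j') => if i' = j' then 1 else 0
    | _, _ => 0

noncomputable def phiExW (m : ℕ) : Matrix (Unit ⊕ Fin m) ((Unit ⊕ Fin m) ⊕ Fin m) ℂ :=
  Matrix.of fun i j =>
    match i, j with
    | Sum.inl _, Sum.inl (Sum.inl _) => ((Real.sqrt 2 : ℂ))⁻¹
    | Sum.inr i', Sum.inr j' => if i' = j' then 1 else 0
    | _, _ => 0

noncomputable def phiExLift {m : ℕ} (x : Unit ⊕ Fin m → ℂ) : (Unit ⊕ Fin m) ⊕ Fin m → ℂ :=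
  Sum.elim (Sum.elim (fun _ => (Real.sqrt 2 : ℂ) * x (Sum.inl ())) (fun i => x (Sum.inr i)))
    (fun i => star (x (Sum.inr i)))

section phiEx

variable {m : ℕ}

theorem phiEx_eq (A : Matrix (Unit ⊕ Fin m) (Unit ⊕ Fin m) ℂ) :
    phiEx m A = (phiExV m)ᴴ * A * phiExV m + (phiExW m)ᴴ * Aᵀ * phiExW m := by
  ext i j
  rcases i with (i | i) | i <;> rcases j with (j | j) | j <;>
    simp [phiEx, phiExV, phiExW, mul_apply, Fintype.sum_sum_type, fromBlocks,
      apply_ite, div_eq_mul_inv, mul_comm, Complex.ofReal_sqrt_two_inv_mul_inv_mul,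
      ← two_mul]

variable (m) in
theorem phiEx_one : phiEx m 1 = 1 := by
  ext i j
  rcases i with (i | i) | i <;> rcases j with (j | j) | j <;>
    simp [phiEx, one_apply, eq_comm]

theorem phiEx_conjTranspose (A : Matrix (Unit ⊕ Fin m) (Unit ⊕ Fin m) ℂ) :
    phiEx m Aᴴ = (phiEx m A)ᴴ := by
  simp only [phiEx_eq, conjTranspose_add, conjTranspose_mul, conjTranspose_conjTranspose,
    Matrix.mul_assoc, conjTranspose_transpose_eq_transpose_conjTranspose]

theorem phiEx_smul_add (c : ℂ) (A B : Matrix (Unit ⊕ Fin m) (Unit ⊕ Fin m) ℂ) :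
    phiEx m (c • A + B) = c • phiEx m A + phiEx m B := by
  simp only [phiEx_eq, transpose_add, transpose_smul, Matrix.mul_add, Matrix.add_mul,
    Matrix.mul_smul, Matrix.smul_mul, smul_add]
  abel

theorem Matrix.PosSemidef.phiEx {A : Matrix (Unit ⊕ Fin m) (Unit ⊕ Fin m) ℂ}
    (hA : A.PosSemidef) : (phiEx m A).PosSemidef := by
  rw [phiEx_eq]
  exact (hA.conjTranspose_mul_mul_same _).add (hA.transpose.conjTranspose_mul_mul_same _)

theorem phiExV_mulVec_phiExLift (x : Unit ⊕ Fin m → ℂ) : phiExV m *ᵥ phiExLift x = x := by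
  ext (i | i) <;> simp [phiExV, phiExLift, mulVec, dotProduct, Fintype.sum_sum_type]

theorem phiExW_mulVec_phiExLift {x : Unit ⊕ Fin m → ℂ}
    (hx : star (x (Sum.inl ())) = x (Sum.inl ())) :
    phiExW m *ᵥ phiExLift x = star x := by
  ext (i | i) <;> simp [phiExW, phiExLift, mulVec, dotProduct, Fintype.sum_sum_type, hx]

theorem star_phiExLift_dotProduct_phiEx_mulVec (A : Matrix (Unit ⊕ Fin m) (Unit ⊕ Fin m) ℂ)
    {x : Unit ⊕ Fin m → ℂ} (hx : star (x (Sum.inl ())) = x (Sum.inl ())) :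
    star (phiExLift x) ⬝ᵥ phiEx m A *ᵥ phiExLift x = star x ⬝ᵥ A *ᵥ x + star x ⬝ᵥ A *ᵥ x := by
  rw [phiEx_eq, add_mulVec, dotProduct_add, star_dotProduct_conjTranspose_mul_mul_mulVec,
    star_dotProduct_conjTranspose_mul_mul_mulVec, star_dotProduct_transpose_mulVec,
    phiExV_mulVec_phiExLift, phiExW_mulVec_phiExLift hx, star_star, star_star]

theorem Matrix.IsHermitian.posSemidef_of_posSemidef_phiEx
    {A : Matrix (Unit ⊕ Fin m) (Unit ⊕ Fin m) ℂ} (hA : A.IsHermitian)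
    (h : (phiEx m A).PosSemidef) : A.PosSemidef :=
  hA.posSemidef_of_forall_real_apply (Sum.inl ()) fun x hx =>
    Complex.nonneg_of_nonneg_add_self <| by
      simpa only [star_phiExLift_dotProduct_phiEx_mulVec A hx] using
        h.dotProduct_mulVec_nonneg (phiExLift x)

end phiEx

theorem stmt15_general (m : ℕ) :
    phiEx m 1 = 1 ∧
    (∀ A, phiEx m Aᴴ = (phiEx m A)ᴴ) ∧
    (∀ (c : ℂ) (A B : Matrix (Unit ⊕ Fin m) (Unit ⊕ Fin m) ℂ),
      phiEx m (c • A + B) = c • phiEx m A + phiEx m B) ∧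
    ∀ A : Matrix (Unit ⊕ Fin m) (Unit ⊕ Fin m) ℂ, A.IsHermitian →
      (A.PosSemidef ↔ (phiEx m A).PosSemidef) :=
  ⟨phiEx_one m, phiEx_conjTranspose, phiEx_smul_add,
    fun _ hA => ⟨Matrix.PosSemidef.phiEx, hA.posSemidef_of_posSemidef_phiEx⟩⟩

theorem stmt15 (m : ℕ) (hm : 1 ≤ m) :
    phiEx m 1 = 1 ∧
    (∀ A, phiEx m Aᴴ = (phiEx m A)ᴴ) ∧
    (∀ (c : ℂ) (A B : Matrix (Unit ⊕ Fin m) (Unit ⊕ Fin m) ℂ),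
      phiEx m (c • A + B) = c • phiEx m A + phiEx m B) ∧
    ∀ A : Matrix (Unit ⊕ Fin m) (Unit ⊕ Fin m) ℂ, A.IsHermitian →
      (A.PosSemidef ↔ (phiEx m A).PosSemidef) :=
  stmt15_general m
end
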